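/- arXiv:2306.00468 — 13 statements merged into one kernel-verified Lean document; each statement's English description precedes it below -/
import Mathlib

section
/- For every quintuple P of positive rationals and every element g of the group G (i.e., every finite composition of the maps α, β, α⁻¹, β⁻¹), one has T(g(P)) = T(P). In particular T(α(a,b,c,d,e)) = T(a,b,c,d,e) and T(β(a,b,c,d,e)) = T(a,b,c,d,e) for all positive rationals a,b,c,d,e. -/
/-! Each generator shifts the coordinates and introduces one new coordinate `x'` through an
exchange relation `x * x' = (binomial in the other coordinates)`; after clearing denominators,
invariance of `T` under a single generator is a polynomial identity. The generators preserve
positivity, so no denominator vanishes along a word, and invariance under all of `G` follows by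
induction on the word. -/

abbrev Q5 := ℚ × ℚ × ℚ × ℚ × ℚ

/-- α(a,b,c,d,e) = (b, (b²+cd)/a, c, d, e) -/
def actAlpha : Q5 → Q5
  | (a, b, c, d, e) => (b, (b ^ 2 + c * d) / a, c, d, e)

/-- β(a,b,c,d,e) = (b, c, (ac+be)/d, a, e) -/
def actBeta : Q5 → Q5
  | (a, b, c, d, e) => (b, c, (a * c + b * e) / d, a, e)

/-- α⁻¹(a,b,c,d,e) = ((a²+cd)/b, a, c, d, e) -/
def actAlphaInv : Q5 → Q5
  | (a, b, c, d, e) => ((a ^ 2 + c * d) / b, a, c, d, e)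

/-- β⁻¹(a,b,c,d,e) = (d, a, b, (ae+bd)/c, e) -/
def actBetaInv : Q5 → Q5
  | (a, b, c, d, e) => (d, a, b, (a * e + b * d) / c, e)

/-- Generators of the group G. -/
inductive Gen | A | B | Ainv | Binv

def Gen.app : Gen → Q5 → Q5
  | .A => actAlpha
  | .B => actBeta
  | .Ainv => actAlphaInv
  | .Binv => actBetaInv

/-- An element of G, given as a word in the generators, applied to a quintuple. -/
def applyWord (w : List Gen) (P : Q5) : Q5 := w.foldl (fun Q g => g.app Q) P

def Pos5 : Q5 → Prop
  | (a, b, c, d, e) => 0 < a ∧ 0 < b ∧ 0 < c ∧ 0 < d ∧ 0 < e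
def T : Q5 → ℚ
  | (a, b, c, d, e) =>
      (a * b * (c ^ 2 + d ^ 2 + e ^ 2) + (a ^ 2 + b ^ 2 + c * d) * (c + d) * e) /
        (a * b * c * d) - 9

section Generators

variable {a b c d e : ℚ} (ha : a ≠ 0) (hb : b ≠ 0) (hc : c ≠ 0) (hd : d ≠ 0)
include ha hb hc hd

theorem T_actAlpha (hnum : b ^ 2 + c * d ≠ 0) :
    T (actAlpha (a, b, c, d, e)) = T (a, b, c, d, e) := by
  simp only [actAlpha, T, sub_left_inj]
  rw [div_eq_div_iff (by simp [*]) (by simp [*])]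
  field_simp
  ring

theorem T_actBeta (hnum : a * c + b * e ≠ 0) :
    T (actBeta (a, b, c, d, e)) = T (a, b, c, d, e) := by
  simp only [actBeta, T, sub_left_inj]
  rw [div_eq_div_iff (by simp [*]) (by simp [*])]
  field_simp
  ring

theorem T_actAlphaInv (hnum : a ^ 2 + c * d ≠ 0) :
    T (actAlphaInv (a, b, c, d, e)) = T (a, b, c, d, e) := by
  simp only [actAlphaInv, T, sub_left_inj]
  rw [div_eq_div_iff (by simp [*]) (by simp [*])]
  field_simp
  ring

theorem T_actBetaInv (hnum : a * e + b * d ≠ 0) :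
    T (actBetaInv (a, b, c, d, e)) = T (a, b, c, d, e) := by
  simp only [actBetaInv, T, sub_left_inj]
  rw [div_eq_div_iff (by simp [*]) (by simp [*])]
  field_simp
  ring

end Generators

theorem Pos5.gen_app {P : Q5} (hP : Pos5 P) (g : Gen) : Pos5 (g.app P) := by
  obtain ⟨a, b, c, d, e⟩ := P
  obtain ⟨ha, hb, hc, hd, he⟩ := hP
  cases g <;> exact ⟨by positivity, by positivity, by positivity, by positivity, by positivity⟩

theorem T_gen_app {P : Q5} (hP : Pos5 P) (g : Gen) : T (g.app P) = T P := by
  obtain ⟨a, b, c, d, e⟩ := P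
  obtain ⟨ha, hb, hc, hd, he⟩ := hP
  cases g
  · exact T_actAlpha ha.ne' hb.ne' hc.ne' hd.ne' (by positivity)
  · exact T_actBeta ha.ne' hb.ne' hc.ne' hd.ne' (by positivity)
  · exact T_actAlphaInv ha.ne' hb.ne' hc.ne' hd.ne' (by positivity)
  · exact T_actBetaInv ha.ne' hb.ne' hc.ne' hd.ne' (by positivity)

theorem T_applyWord (w : List Gen) {P : Q5} (hP : Pos5 P) : T (applyWord w P) = T P := by
  induction w generalizing P with
  | nil => rfl
  | cons g w ih => exact (ih (hP.gen_app g)).trans (T_gen_app hP g)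

/-- T is invariant under every element of G; in particular under α and β. -/
theorem T_invariant_under_G :
    (∀ P : Q5, Pos5 P → ∀ w : List Gen, T (applyWord w P) = T P) ∧
    (∀ a b c d e : ℚ, 0 < a → 0 < b → 0 < c → 0 < d → 0 < e →
      T (actAlpha (a, b, c, d, e)) = T (a, b, c, d, e) ∧
      T (actBeta (a, b, c, d, e)) = T (a, b, c, d, e)) := by
  refine ⟨fun P hP w => T_applyWord w hP, fun a b c d e ha hb hc hd he => ?_⟩
  have hP : Pos5 (a, b, c, d, e) := ⟨ha, hb, hc, hd, he⟩
  exact ⟨T_gen_app hP .A, T_gen_app hP .B⟩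
end

section
/- Fix a positive integer ε. For every element g of the group G (i.e., every finite composition of the maps α, β, α⁻¹, β⁻¹), each of the five components of g(ε,ε,ε,ε,ε) is a positive integer divisible by ε. -/
/-- `q` is a positive integer divisible by `ε` (i.e. `q = ε·k` for a positive natural `k`). -/
def IsPosMultOf (ε : ℕ) (q : ℚ) : Prop := ∃ k : ℕ, 0 < k ∧ q = ((ε * k : ℕ) : ℚ)

/-!
Every generator is homogeneous of degree one, so `g (ε, …, ε) = ε • g (1, …, 1)`, and it
suffices to show that the orbit of `(1, 1, 1, 1, 1)` consists of positive integer points;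
positivity is clear. For integrality, follow integer quadruples `(a, b, c, d)` (the fifth
coordinate stays `1`) that are pairwise coprime and satisfy `a ∣ b² + cd`, `b ∣ a² + cd`,
`d ∣ ac + b`, `c ∣ a + bd`: these are exactly the conditions for `α`, `α⁻¹`, `β`, `β⁻¹` to
produce integers at `(a, b, c, d, 1)`. They propagate: after `α`, the new entry
`B = (b² + cd) / a` satisfies `b ∣ a² (B² + cd)`, and `a` is coprime to `b`. Since `α⁻¹` and
`β⁻¹` are the conjugates of `α` and `β` by `(a, b, c, d) ↦ (b, a, d, c)`, only the two moves
`α` and `β` need to be checked.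
-/

theorem IsCoprime.of_mul_eq_add_mul {R : Type*} [CommRing R] {x y z m n : R}
    (h : IsCoprime x y) (hmn : m * n = y + x * z) : IsCoprime x n :=
  (hmn ▸ h.add_mul_left_right z).of_mul_right_right

structure IsSeed {R : Type*} [CommRing R] (a b c d : R) : Prop where
  coprime_ab : IsCoprime a b
  coprime_ac : IsCoprime a c
  coprime_ad : IsCoprime a d
  coprime_bc : IsCoprime b c
  coprime_bd : IsCoprime b d
  coprime_cd : IsCoprime c d
  dvd_alpha : a ∣ b ^ 2 + c * d
  dvd_alphaInv : b ∣ a ^ 2 + c * d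
  dvd_beta : d ∣ a * c + b
  dvd_betaInv : c ∣ a + b * d

namespace IsSeed

variable {R : Type*} [CommRing R] {a b c d : R}

theorem one : IsSeed (1 : R) 1 1 1 where
  coprime_ab := isCoprime_one_left
  coprime_ac := isCoprime_one_left
  coprime_ad := isCoprime_one_left
  coprime_bc := isCoprime_one_left
  coprime_bd := isCoprime_one_left
  coprime_cd := isCoprime_one_left
  dvd_alpha := one_dvd _
  dvd_alphaInv := one_dvd _
  dvd_beta := one_dvd _
  dvd_betaInv := one_dvd _

theorem swap (h : IsSeed a b c d) : IsSeed b a d c where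
  coprime_ab := h.coprime_ab.symm
  coprime_ac := h.coprime_bd
  coprime_ad := h.coprime_bc
  coprime_bc := h.coprime_ad
  coprime_bd := h.coprime_ac
  coprime_cd := h.coprime_cd.symm
  dvd_alpha := by simpa only [mul_comm d c] using h.dvd_alphaInv
  dvd_alphaInv := by simpa only [mul_comm d c] using h.dvd_alpha
  dvd_beta := by simpa only [mul_comm b d, add_comm] using h.dvd_betaInv
  dvd_betaInv := by simpa only [mul_comm a c, add_comm] using h.dvd_beta

theorem mutateAlpha {B : R} (h : IsSeed a b c d) (hB : a * B = b ^ 2 + c * d) :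
    IsSeed b B c d := by
  obtain ⟨j, hj⟩ := h.dvd_alphaInv
  obtain ⟨k, hk⟩ := h.dvd_beta
  obtain ⟨l, hl⟩ := h.dvd_betaInv
  refine
    { coprime_ab := (h.coprime_bc.mul_right h.coprime_bd).of_mul_eq_add_mul (m := a) (z := b)
        (by linear_combination hB)
      coprime_ac := h.coprime_bc
      coprime_ad := h.coprime_bd
      coprime_bc := ((h.coprime_bc.symm.pow_right (n := 2)).of_mul_eq_add_mul (m := a) (z := d)
        hB).symm
      coprime_bd := ((h.coprime_bd.symm.pow_right (n := 2)).of_mul_eq_add_mul (m := a) (z := c)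
        (by linear_combination hB)).symm
      coprime_cd := h.coprime_cd
      dvd_alpha := (h.coprime_ab.symm.pow_right (n := 2)).dvd_of_dvd_mul_left
        ⟨b ^ 3 + 2 * b * (c * d) + j * (c * d), by
          linear_combination (a * B + b ^ 2 + c * d) * hB + (c * d) * hj⟩
      dvd_alphaInv := ⟨a, by linear_combination -hB⟩
      dvd_beta := h.coprime_ad.symm.dvd_of_dvd_mul_left
        ⟨b * k + c, by linear_combination hB + b * hk⟩
      dvd_betaInv := h.coprime_ac.symm.dvd_of_dvd_mul_left
        ⟨b * l + d ^ 2, by linear_combination d * hB + b * hl⟩ }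

theorem mutateBeta {C : R} (h : IsSeed a b c d) (hC : d * C = a * c + b) :
    IsSeed b c C a := by
  obtain ⟨i, hi⟩ := h.dvd_alpha
  obtain ⟨j, hj⟩ := h.dvd_alphaInv
  obtain ⟨l, hl⟩ := h.dvd_betaInv
  refine
    { coprime_ab := h.coprime_bc
      coprime_ac := (h.coprime_ab.symm.mul_right h.coprime_bc).of_mul_eq_add_mul (m := d) (n := C)
        (z := 1) (by linear_combination hC)
      coprime_ad := h.coprime_ab.symm
      coprime_bc := h.coprime_bc.symm.of_mul_eq_add_mul (m := d) (n := C) (z := a)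
        (by linear_combination hC)
      coprime_bd := h.coprime_ac.symm
      coprime_cd := (h.coprime_ab.of_mul_eq_add_mul (m := d) (n := C) (z := c)
        (by linear_combination hC)).symm
      dvd_alpha := h.coprime_bd.dvd_of_dvd_mul_left
        ⟨c * j + a, by linear_combination c * hj + a * hC⟩
      dvd_alphaInv := h.coprime_cd.dvd_of_dvd_mul_left
        ⟨b * l + a ^ 2, by linear_combination b * hl + a * hC⟩
      dvd_beta := h.coprime_ad.dvd_of_dvd_mul_left
        ⟨b * c + i, by linear_combination b * hC + hi⟩
      dvd_betaInv := ⟨d, by linear_combination -hC⟩ }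

end IsSeed

theorem Gen.pos5_app (g : Gen) {P : Q5} (hP : Pos5 P) : Pos5 (g.app P) := by
  obtain ⟨a, b, c, d, e⟩ := P
  obtain ⟨ha, hb, hc, hd, he⟩ := hP
  cases g <;> exact ⟨by positivity, by positivity, by positivity, by positivity, by positivity⟩

theorem Gen.app_smul (g : Gen) (t : ℚ) (P : Q5) : g.app (t • P) = t • g.app P := by
  obtain ⟨a, b, c, d, e⟩ := P
  have hom : ∀ x y : ℚ, t * (x / y) = t ^ 2 * x / (t * y) := fun x y => by
    rw [mul_div_mul_comm, sq, mul_self_div_self]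
  cases g <;>
    simp only [Gen.app, actAlpha, actBeta, actAlphaInv, actBetaInv, Prod.smul_mk, smul_eq_mul,
      Prod.mk.injEq, hom, true_and, and_true] <;>
    ring

theorem mapsTo_applyWord {S : Set Q5} (hS : ∀ g : Gen, Set.MapsTo g.app S S) (w : List Gen) :
    Set.MapsTo (applyWord w) S S := by
  induction w with
  | nil => exact Set.mapsTo_id S
  | cons g w ih => exact ih.comp (hS g)

theorem applyWord_smul (w : List Gen) (t : ℚ) (P : Q5) :
    applyWord w (t • P) = t • applyWord w P := by
  induction w generalizing P with
  | nil => rfl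
  | cons g w ih => exact (congrArg (applyWord w) (g.app_smul t P)).trans (ih _)

def seedPoints : Set Q5 :=
  {P | Pos5 P ∧ ∃ a b c d : ℤ, IsSeed a b c d ∧
    P = ((a : ℚ), (b : ℚ), (c : ℚ), (d : ℚ), 1)}

theorem Gen.mapsTo_seedPoints (g : Gen) : Set.MapsTo g.app seedPoints seedPoints := by
  rintro _ ⟨hP, a, b, c, d, h, rfl⟩
  refine ⟨g.pos5_app hP, ?_⟩
  obtain ⟨ha, hb, hc, hd, -⟩ := hP
  cases g with
  | A =>
    obtain ⟨B, hB⟩ := h.dvd_alpha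
    refine ⟨b, B, c, d, h.mutateAlpha hB.symm, ?_⟩
    simp only [Gen.app, actAlpha, Prod.mk.injEq, true_and, and_true]
    exact div_eq_of_eq_mul ha.ne' (by exact_mod_cast hB.trans (mul_comm a B))
  | Ainv =>
    obtain ⟨A, hA⟩ := h.dvd_alphaInv
    refine ⟨A, a, c, d, (h.swap.mutateAlpha (B := A) (by linear_combination hA.symm)).swap, ?_⟩
    simp only [Gen.app, actAlphaInv, Prod.mk.injEq, and_true]
    exact div_eq_of_eq_mul hb.ne' (by exact_mod_cast hA.trans (mul_comm b A))
  | B =>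
    obtain ⟨C, hC⟩ := h.dvd_beta
    refine ⟨b, c, C, a, h.mutateBeta hC.symm, ?_⟩
    simp only [Gen.app, actBeta, Prod.mk.injEq, true_and, and_true, mul_one]
    exact div_eq_of_eq_mul hd.ne' (by exact_mod_cast hC.trans (mul_comm d C))
  | Binv =>
    obtain ⟨D, hD⟩ := h.dvd_betaInv
    refine ⟨d, a, b, D, (h.swap.mutateBeta (C := D) (by linear_combination hD.symm)).swap, ?_⟩
    simp only [Gen.app, actBetaInv, Prod.mk.injEq, true_and, and_true, mul_one]
    exact div_eq_of_eq_mul hc.ne' (by exact_mod_cast hD.trans (mul_comm c D))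

theorem isPosMultOf_natCast_mul_intCast (ε : ℕ) {n : ℤ} (hn : (0 : ℚ) < n) :
    IsPosMultOf ε (ε * n) := by
  lift n to ℕ using (Int.cast_pos.mp hn).le
  exact ⟨n, by exact_mod_cast hn, by push_cast; rfl⟩

theorem components_of_orbit_are_multiples_general (ε : ℕ) (w : List Gen) :
    IsPosMultOf ε (applyWord w ((ε : ℚ), (ε : ℚ), (ε : ℚ), (ε : ℚ), (ε : ℚ))).1 ∧
    IsPosMultOf ε (applyWord w ((ε : ℚ), (ε : ℚ), (ε : ℚ), (ε : ℚ), (ε : ℚ))).2.1 ∧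
    IsPosMultOf ε (applyWord w ((ε : ℚ), (ε : ℚ), (ε : ℚ), (ε : ℚ), (ε : ℚ))).2.2.1 ∧
    IsPosMultOf ε (applyWord w ((ε : ℚ), (ε : ℚ), (ε : ℚ), (ε : ℚ), (ε : ℚ))).2.2.2.1 ∧
    IsPosMultOf ε (applyWord w ((ε : ℚ), (ε : ℚ), (ε : ℚ), (ε : ℚ), (ε : ℚ))).2.2.2.2 := by
  have hstart :
      ((ε : ℚ), (ε : ℚ), (ε : ℚ), (ε : ℚ), (ε : ℚ)) = (ε : ℚ) • ((1 : ℚ), 1, 1, 1, 1) := by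
    simp
  have hone : ((1 : ℚ), (1 : ℚ), (1 : ℚ), (1 : ℚ), (1 : ℚ)) ∈ seedPoints :=
    ⟨by norm_num [Pos5], 1, 1, 1, 1, IsSeed.one, by simp⟩
  obtain ⟨hpos, a, b, c, d, -, hP⟩ := mapsTo_applyWord Gen.mapsTo_seedPoints w hone
  rw [hP] at hpos
  obtain ⟨ha, hb, hc, hd, -⟩ := hpos
  rw [hstart, applyWord_smul, hP]
  simp only [Prod.smul_mk, smul_eq_mul]
  exact ⟨isPosMultOf_natCast_mul_intCast ε ha, isPosMultOf_natCast_mul_intCast ε hb,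
    isPosMultOf_natCast_mul_intCast ε hc, isPosMultOf_natCast_mul_intCast ε hd,
    ⟨1, one_pos, by simp⟩⟩

/-- every component of g(ε,ε,ε,ε,ε) is a positive integer divisible by ε. -/
theorem components_of_orbit_are_multiples (ε : ℕ) (hε : 0 < ε) (w : List Gen) :
    IsPosMultOf ε (applyWord w ((ε : ℚ), (ε : ℚ), (ε : ℚ), (ε : ℚ), (ε : ℚ))).1 ∧
    IsPosMultOf ε (applyWord w ((ε : ℚ), (ε : ℚ), (ε : ℚ), (ε : ℚ), (ε : ℚ))).2.1 ∧
    IsPosMultOf ε (applyWord w ((ε : ℚ), (ε : ℚ), (ε : ℚ), (ε : ℚ), (ε : ℚ))).2.2.1 ∧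
    IsPosMultOf ε (applyWord w ((ε : ℚ), (ε : ℚ), (ε : ℚ), (ε : ℚ), (ε : ℚ))).2.2.2.1 ∧
    IsPosMultOf ε (applyWord w ((ε : ℚ), (ε : ℚ), (ε : ℚ), (ε : ℚ), (ε : ℚ))).2.2.2.2 :=
  components_of_orbit_are_multiples_general ε w
end

section
/- For every quintuple P = (a,b,c,d,e) of positive rationals, T(P) = T̃(φ(P)); that is, writing φ(P) = (C₀,C₁,C₂), one has T(a,b,c,d,e) = C₀C₁C₂ − C₀² − C₁² − C₂² − 7. -/
def phiC0 : Q5 → ℚ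
  | (a, b, c, d, _) => (a ^ 2 + b ^ 2 + c * d) / (a * b)

def phiC1 : Q5 → ℚ
  | (a, b, c, d, e) => (c ^ 2 * d + a ^ 2 * c + b ^ 2 * d + a * b * e) / (b * c * d)

def phiC2 : Q5 → ℚ
  | (a, b, c, d, e) => (c * d ^ 2 + a ^ 2 * c + b ^ 2 * d + a * b * e) / (a * c * d)

def phi (P : Q5) : ℚ × ℚ × ℚ := (phiC0 P, phiC1 P, phiC2 P)

def Ttilde (p : ℚ × ℚ × ℚ) : ℚ := p.1 * p.2.1 * p.2.2 - p.1 ^ 2 - p.2.1 ^ 2 - p.2.2 ^ 2 - 7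

theorem T_eq_phiC_markov (a b c d e : ℚ) (ha : a ≠ 0) (hb : b ≠ 0) (hc : c ≠ 0) (hd : d ≠ 0) :
    T (a, b, c, d, e) =
      phiC0 (a, b, c, d, e) * phiC1 (a, b, c, d, e) * phiC2 (a, b, c, d, e) -
        phiC0 (a, b, c, d, e) ^ 2 - phiC1 (a, b, c, d, e) ^ 2 - phiC2 (a, b, c, d, e) ^ 2 - 7 := by
  simp only [T, phiC0, phiC1, phiC2]
  field_simp
  ring

theorem T_eq_Ttilde_phi_general (a b c d e : ℚ)
    (ha : 0 < a) (hb : 0 < b) (hc : 0 < c) (hd : 0 < d) :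
    T (a, b, c, d, e) = Ttilde (phi (a, b, c, d, e)) ∧
    T (a, b, c, d, e) =
      phiC0 (a, b, c, d, e) * phiC1 (a, b, c, d, e) * phiC2 (a, b, c, d, e) -
        phiC0 (a, b, c, d, e) ^ 2 - phiC1 (a, b, c, d, e) ^ 2 - phiC2 (a, b, c, d, e) ^ 2 - 7 := by
  have h := T_eq_phiC_markov a b c d e ha.ne' hb.ne' hc.ne' hd.ne'
  -- `Ttilde (phi P)` unfolds definitionally to the right-hand side of `h`.
  exact ⟨h, h⟩

/-- T(P) = T̃(φ(P)) for every quintuple of positive rationals. -/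
theorem T_eq_Ttilde_phi (a b c d e : ℚ)
    (ha : 0 < a) (hb : 0 < b) (hc : 0 < c) (hd : 0 < d) (he : 0 < e) :
    T (a, b, c, d, e) = Ttilde (phi (a, b, c, d, e)) ∧
    T (a, b, c, d, e) =
      phiC0 (a, b, c, d, e) * phiC1 (a, b, c, d, e) * phiC2 (a, b, c, d, e) -
        phiC0 (a, b, c, d, e) ^ 2 - phiC1 (a, b, c, d, e) ^ 2 - phiC2 (a, b, c, d, e) ^ 2 - 7 :=
  T_eq_Ttilde_phi_general a b c d e ha hb hc hd
end

section
/- For every quintuple P of positive rationals, writing C₀, C₁, C₂ for the three component functions of φ: C₀(α(P)) = C₀(P), C₁(α(P)) = C₂(P), C₂(α(P)) = C₀(P)·C₂(P) − C₁(P), and C₀(β(P)) = C₁(P), C₁(β(P)) = C₂(P), C₂(β(P)) = C₀(P). Equivalently, φ(α(P)) = α̃(φ(P)) and φ(β(P)) = β̃(φ(P)). -/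
abbrev Q3 := ℚ × ℚ × ℚ

/-- α̃(x,y,z) = (x, z, xz−y) -/
def tAlpha : Q3 → Q3
  | (x, y, z) => (x, z, x * z - y)

/-- β̃(x,y,z) = (y, z, x) -/
def tBeta : Q3 → Q3
  | (x, y, z) => (y, z, x)

/-- α̃⁻¹(x,y,z) = (x, xy−z, y) -/
def tAlphaInv : Q3 → Q3
  | (x, y, z) => (x, x * y - z, y)

/-- β̃⁻¹(x,y,z) = (z, x, y) -/
def tBetaInv : Q3 → Q3
  | (x, y, z) => (z, x, y)

/-- Generators of the group G̃. -/
inductive TGen | A | B | Ainv | Binv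

def TGen.app : TGen → Q3 → Q3
  | .A => tAlpha
  | .B => tBeta
  | .Ainv => tAlphaInv
  | .Binv => tBetaInv

/-- An element of G̃, given as a word in the generators, applied to a triple. -/
def applyTWord (w : List TGen) (p : Q3) : Q3 := w.foldl (fun q g => g.app q) p
/-! Every identity is an identity of rational functions in `a, b, c, d, e`. Its denominators are
monomials in `a, b, c, d` and the exchange binomials `b ^ 2 + c * d`, `a * c + b * e` introduced by `α`
and `β`; all are nonzero on positive quintuples, and clearing them leaves a polynomial identity. -/

section

variable {a b c d e : ℚ}

theorem phiC0_actAlpha (ha : a ≠ 0) (hb : b ≠ 0) (hα : b ^ 2 + c * d ≠ 0) :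
    phiC0 (actAlpha (a, b, c, d, e)) = phiC0 (a, b, c, d, e) := by
  simp only [actAlpha, phiC0]
  field_simp
  ring

theorem phiC1_actAlpha (ha : a ≠ 0) (hc : c ≠ 0) (hd : d ≠ 0) (hα : b ^ 2 + c * d ≠ 0) :
    phiC1 (actAlpha (a, b, c, d, e)) = phiC2 (a, b, c, d, e) := by
  simp only [actAlpha, phiC1, phiC2]
  field_simp
  ring

theorem phiC2_actAlpha (ha : a ≠ 0) (hb : b ≠ 0) (hc : c ≠ 0) (hd : d ≠ 0) :
    phiC2 (actAlpha (a, b, c, d, e)) =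
      phiC0 (a, b, c, d, e) * phiC2 (a, b, c, d, e) - phiC1 (a, b, c, d, e) := by
  simp only [actAlpha, phiC0, phiC1, phiC2]
  field_simp
  ring

theorem phiC0_actBeta (hb : b ≠ 0) (hc : c ≠ 0) (hd : d ≠ 0) :
    phiC0 (actBeta (a, b, c, d, e)) = phiC1 (a, b, c, d, e) := by
  simp only [actBeta, phiC0, phiC1]
  field_simp
  ring

theorem phiC1_actBeta (ha : a ≠ 0) (hc : c ≠ 0) (hd : d ≠ 0) (hβ : a * c + b * e ≠ 0) :
    phiC1 (actBeta (a, b, c, d, e)) = phiC2 (a, b, c, d, e) := by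
  simp only [actBeta, phiC1, phiC2]
  field_simp
  ring

theorem phiC2_actBeta (ha : a ≠ 0) (hb : b ≠ 0) (hd : d ≠ 0) (hβ : a * c + b * e ≠ 0) :
    phiC2 (actBeta (a, b, c, d, e)) = phiC0 (a, b, c, d, e) := by
  simp only [actBeta, phiC2, phiC0]
  field_simp
  ring

end

/-- the component functions of φ transform under α and β as stated;
equivalently φ∘α = α̃∘φ and φ∘β = β̃∘φ on positive quintuples. -/
theorem phi_compat_alpha_beta (P : Q5) (hP : Pos5 P) :
    phiC0 (actAlpha P) = phiC0 P ∧
    phiC1 (actAlpha P) = phiC2 P ∧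
    phiC2 (actAlpha P) = phiC0 P * phiC2 P - phiC1 P ∧
    phiC0 (actBeta P) = phiC1 P ∧
    phiC1 (actBeta P) = phiC2 P ∧
    phiC2 (actBeta P) = phiC0 P ∧
    phi (actAlpha P) = tAlpha (phi P) ∧
    phi (actBeta P) = tBeta (phi P) := by
  obtain ⟨a, b, c, d, e⟩ := P
  obtain ⟨ha, hb, hc, hd, he⟩ := hP
  have hα : b ^ 2 + c * d ≠ 0 := by positivity
  have hβ : a * c + b * e ≠ 0 := by positivity
  have h0α := phiC0_actAlpha (e := e) ha.ne' hb.ne' hα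
  have h1α := phiC1_actAlpha (e := e) ha.ne' hc.ne' hd.ne' hα
  have h2α := phiC2_actAlpha (e := e) ha.ne' hb.ne' hc.ne' hd.ne'
  have h0β := phiC0_actBeta (a := a) (e := e) hb.ne' hc.ne' hd.ne'
  have h1β := phiC1_actBeta ha.ne' hc.ne' hd.ne' hβ
  have h2β := phiC2_actBeta ha.ne' hb.ne' hd.ne' hβ
  refine ⟨h0α, h1α, h2α, h0β, h1β, h2β, ?_, ?_⟩
  · rw [phi, phi, h0α, h1α, h2α, tAlpha]
  · rw [phi, phi, h0β, h1β, h2β, tBeta]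
end

section
/- The orbit G̃(3,4,4) equals the set of all triples (x,y,z) of positive integers satisfying T̃(x,y,z) = 0, i.e., satisfying xyz = x² + y² + z² + 7. In particular, a triple of positive integers satisfies xyz = x² + y² + z² + 7 if and only if it can be obtained from (3,4,4) by a finite composition of α̃, β̃, α̃⁻¹, β̃⁻¹. -/
/-- The orbit of (3,4,4) under the group G̃ generated by α̃ and β̃. -/
def orbit344 : Set Q3 := {p | ∃ w : List TGen, applyTWord w (3, 4, 4) = p}

/-!
Vieta jumping. For fixed `x, y`, the solutions `z` of `xyz = x² + y² + z² + 7` are the roots of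
`z² - xy z + (x² + y² + 7)`, so `z ↦ xy - z` swaps them; their product is positive, so the jump
preserves positive solutions, and `α̃`, `β̃` act on them. Conversely, if `z` is the largest
coordinate then `xy - z < z` unless the triple is a rotation of `(3,4,4)`, so jumping the largest
coordinate descends to `(3,4,4)`.
-/

theorem applyTWord_mem {S : Set Q3} (hS : ∀ g : TGen, ∀ p ∈ S, g.app p ∈ S)
    (w : List TGen) {p : Q3} (hp : p ∈ S) : applyTWord w p ∈ S := by
  induction w generalizing p with
  | nil => exact hp
  | cons g w ih => exact ih (hS g p hp)

theorem TGen.app_mem_orbit344 (g : TGen) {p : Q3} (hp : p ∈ orbit344) : g.app p ∈ orbit344 := by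
  obtain ⟨w, rfl⟩ := hp
  exact ⟨w ++ [g], by simp [applyTWord]⟩

def IsSolution (x y z : ℕ) : Prop :=
  0 < x ∧ 0 < y ∧ 0 < z ∧ x * y * z = x ^ 2 + y ^ 2 + z ^ 2 + 7

namespace IsSolution

variable {x y z : ℕ}

theorem swap (h : IsSolution x y z) : IsSolution x z y := by
  obtain ⟨hx, hy, hz, h⟩ := h
  exact ⟨hx, hz, hy, by linarith⟩

theorem rotate (h : IsSolution x y z) : IsSolution y z x := by
  obtain ⟨hx, hy, hz, h⟩ := h
  exact ⟨hy, hz, hx, by linarith⟩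

theorem three_le (h : IsSolution x y z) : 3 ≤ x := by
  obtain ⟨hx, hy, hz, h⟩ := h
  by_contra! hx3
  interval_cases x <;> zify at h <;> nlinarith [sq_nonneg ((y : ℤ) - z)]

theorem lt_mul (h : IsSolution x y z) : z < x * y := by
  obtain ⟨hx, hy, hz, h⟩ := h
  nlinarith

theorem jump (h : IsSolution x y z) : IsSolution x y (x * y - z) := by
  have hlt := h.lt_mul
  obtain ⟨hx, hy, hz, h⟩ := h
  refine ⟨hx, hy, by omega, ?_⟩
  zify [hlt.le] at h ⊢
  linear_combination h

theorem eq_of_le_jump (h : IsSolution x y z) (hxy : x ≤ y) (hyz : y ≤ z)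
    (hjump : z ≤ x * y - z) : x = 3 ∧ y = 4 ∧ z = 4 := by
  have hx := h.three_le
  obtain ⟨-, -, -, h⟩ := h
  have hjump' : 2 * z ≤ x * y := by omega
  zify at h hjump' hxy hyz hx
  -- by Vieta this says `(x - 2) y² ≤ x² + 7`, which forces `x = 3` and `y ≤ 4`
  have hroots : 0 ≤ ((z : ℤ) - y) * (x * y - z - y) := mul_nonneg (by linarith) (by linarith)
  have hx3 : (x : ℤ) = 3 := by nlinarith
  have hy4 : (y : ℤ) ≤ 4 := by nlinarith
  have hz6 : (z : ℤ) ≤ 6 := by nlinarith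
  norm_cast at *
  subst hx3
  interval_cases y <;> interval_cases z <;> omega

theorem mem_orbit344_of_le_of_le (h : IsSolution x y z) (hxz : x ≤ z) (hyz : y ≤ z)
    (ih : ∀ a b c, IsSolution a b c → a + b + c < x + y + z →
      ((a : ℚ), (b : ℚ), (c : ℚ)) ∈ orbit344) :
    ((x : ℚ), (y : ℚ), (z : ℚ)) ∈ orbit344 := by
  by_cases hjump : z ≤ x * y - z
  · rcases le_total x y with hxy | hyx
    · obtain ⟨rfl, rfl, rfl⟩ := h.eq_of_le_jump hxy hyz hjump
      exact ⟨[], by norm_num [applyTWord]⟩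
    · obtain ⟨rfl, rfl, rfl⟩ := h.rotate.swap.eq_of_le_jump hyx hxz (by rwa [mul_comm])
      exact ⟨[.Binv], by norm_num [applyTWord, TGen.app, tBetaInv]⟩
  · have hlt := h.lt_mul
    have hsmaller := ih x (x * y - z) y h.jump.swap (by omega)
    convert TGen.A.app_mem_orbit344 hsmaller using 1
    simp [TGen.app, tAlpha, Nat.cast_sub hlt.le]

theorem mem_orbit344 (h : IsSolution x y z) : ((x : ℚ), (y : ℚ), (z : ℚ)) ∈ orbit344 := by
  induction hn : x + y + z using Nat.strong_induction_on generalizing x y z with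
  | _ _ ih =>
    have ih' : ∀ a b c, IsSolution a b c → a + b + c < x + y + z →
        ((a : ℚ), (b : ℚ), (c : ℚ)) ∈ orbit344 := fun a b c h' hlt => ih _ (hn ▸ hlt) h' rfl
    by_cases hz : x ≤ z ∧ y ≤ z
    · exact h.mem_orbit344_of_le_of_le hz.1 hz.2 ih'
    by_cases hx : y ≤ x ∧ z ≤ x
    · exact TGen.Binv.app_mem_orbit344 <| h.rotate.mem_orbit344_of_le_of_le hx.1 hx.2
        fun a b c h' hlt => ih' a b c h' (by omega)
    · exact TGen.B.app_mem_orbit344 <| h.rotate.rotate.mem_orbit344_of_le_of_le (by omega)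
        (by omega) fun a b c h' hlt => ih' a b c h' (by omega)

end IsSolution

def solutionSet : Set Q3 :=
  {p | ∃ x y z : ℕ, IsSolution x y z ∧ p = ((x : ℚ), (y : ℚ), (z : ℚ))}

theorem TGen.app_mem_solutionSet (g : TGen) : ∀ p ∈ solutionSet, g.app p ∈ solutionSet := by
  rintro _ ⟨x, y, z, h, rfl⟩
  cases g with
  | A => exact ⟨x, z, x * z - y, h.swap.jump,
      by simp [TGen.app, tAlpha, Nat.cast_sub h.swap.lt_mul.le]⟩
  | B => exact ⟨y, z, x, h.rotate, rfl⟩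
  | Ainv => exact ⟨x, x * y - z, y, h.jump.swap,
      by simp [TGen.app, tAlphaInv, Nat.cast_sub h.lt_mul.le]⟩
  | Binv => exact ⟨z, x, y, h.rotate.rotate, rfl⟩

theorem orbit344_subset_solutionSet : orbit344 ⊆ solutionSet := by
  rintro _ ⟨w, rfl⟩
  exact applyTWord_mem TGen.app_mem_solutionSet w ⟨3, 4, 4, by norm_num [IsSolution], by norm_num⟩

theorem solutionSet_subset_orbit344 : solutionSet ⊆ orbit344 := by
  rintro _ ⟨x, y, z, h, rfl⟩
  exact h.mem_orbit344

/-- the orbit G̃(3,4,4) is exactly the set of positive integer solutions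
of xyz = x² + y² + z² + 7. -/
theorem orbit344_eq_solutions :
    orbit344 = {p : Q3 | ∃ x y z : ℕ, 0 < x ∧ 0 < y ∧ 0 < z ∧
      p = ((x : ℚ), (y : ℚ), (z : ℚ)) ∧ x * y * z = x ^ 2 + y ^ 2 + z ^ 2 + 7} := by
  rw [orbit344_subset_solutionSet.antisymm solutionSet_subset_orbit344]
  ext p
  simp only [solutionSet, IsSolution, Set.mem_ofPred_eq]
  grind
end

section
/- Let x, y, z be positive integers with x ≤ y ≤ z and xyz = x² + y² + z² + 7. If y = z then (x,y,z) = (3,4,4), and if x = y then (x,y,z) = (4,4,13); in particular there is no solution with x = y = z. -/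
/-!
If `y = z`, the equation reads `y² (x - 2) = x² + 7`; as `y ≥ x` this forces `x = 3`, and then
`y = 4`. If `x = y`, the equation is a quadratic in `z` whose discriminant `x⁴ - 8x² - 28` must be a
perfect square; for `x ≥ 6` it lies strictly between `(x² - 5)²` and `(x² - 4)²`, so `x ≤ 5`, and
since `z < x²` only finitely many cases remain.
-/

theorem Int.not_sq_lt_sq_lt_succ_sq (m k : ℤ) : ¬(m ^ 2 < k ^ 2 ∧ k ^ 2 < (m + 1) ^ 2) := by
  rintro ⟨hl, hr⟩
  rw [sq_lt_sq] at hl hr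
  have := abs_add_le m 1
  simp only [abs_one] at this
  omega

theorem discriminant_eq_sq_of_eq (x z : ℤ) (h : x ^ 2 * z = 2 * x ^ 2 + z ^ 2 + 7) :
    (2 * z - x ^ 2) ^ 2 = x ^ 4 - 8 * x ^ 2 - 28 := by
  linear_combination (-4 : ℤ) * h

theorem two_mul_sq_le_of_eq (x z : ℤ) (h : x ^ 2 * z = 2 * x ^ 2 + z ^ 2 + 7) :
    2 * x ^ 2 ≤ 53 := by
  by_contra! hx
  apply Int.not_sq_lt_sq_lt_succ_sq (x ^ 2 - 5) (2 * z - x ^ 2)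
  rw [discriminant_eq_sq_of_eq x z h]
  constructor <;> nlinarith

theorem eq_three_four_of_mul_self_eq (x y : ℕ) (hxy : x ≤ y)
    (h : x * y * y = x ^ 2 + y ^ 2 + y ^ 2 + 7) : x = 3 ∧ y = 4 := by
  have hx3 : 3 ≤ x := by
    by_contra! hx
    nlinarith
  have hx : x = 3 := by
    by_contra hx
    have hx4 : 4 ≤ x := by omega
    nlinarith [Nat.mul_le_mul hxy hxy]
  subst hx
  have hy : y ^ 2 = 4 ^ 2 := by linarith
  exact ⟨rfl, Nat.pow_left_injective two_ne_zero hy⟩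

theorem eq_four_thirteen_of_self_mul_eq (x z : ℕ) (hxz : x ≤ z)
    (h : x * x * z = x ^ 2 + x ^ 2 + z ^ 2 + 7) : x = 4 ∧ z = 13 := by
  have hx5 : x ≤ 5 := by
    have := two_mul_sq_le_of_eq x z (by push_cast [← Nat.cast_inj (R := ℤ)] at h; linear_combination h)
    nlinarith
  have hz : z < x ^ 2 := by nlinarith
  interval_cases x <;> interval_cases z <;> omega

theorem boundary_solutions_general (x y z : ℕ) (hxy : x ≤ y) (hyz : y ≤ z)
    (h : x * y * z = x ^ 2 + y ^ 2 + z ^ 2 + 7) :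
    (y = z → x = 3 ∧ y = 4 ∧ z = 4) ∧
    (x = y → x = 4 ∧ y = 4 ∧ z = 13) ∧
    ¬(x = y ∧ y = z) := by
  have case_yz : y = z → x = 3 ∧ y = 4 ∧ z = 4 := by
    rintro rfl
    obtain ⟨hx, hy⟩ := eq_three_four_of_mul_self_eq x y hxy h
    exact ⟨hx, hy, hy⟩
  have case_xy : x = y → x = 4 ∧ y = 4 ∧ z = 13 := by
    rintro rfl
    obtain ⟨hx, hz⟩ := eq_four_thirteen_of_self_mul_eq x z hyz h
    exact ⟨hx, hx, hz⟩
  refine ⟨case_yz, case_xy, fun ⟨hxy', hyz'⟩ => ?_⟩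
  have := (case_yz hyz').1
  have := (case_xy hxy').1
  omega

/-- for positive integers x ≤ y ≤ z with xyz = x² + y² + z² + 7:
if y = z then (x,y,z) = (3,4,4); if x = y then (x,y,z) = (4,4,13);
in particular there is no solution with x = y = z. -/
theorem boundary_solutions (x y z : ℕ) (hx : 0 < x) (hxy : x ≤ y) (hyz : y ≤ z)
    (h : x * y * z = x ^ 2 + y ^ 2 + z ^ 2 + 7) :
    (y = z → x = 3 ∧ y = 4 ∧ z = 4) ∧
    (x = y → x = 4 ∧ y = 4 ∧ z = 13) ∧
    ¬(x = y ∧ y = z) :=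
  boundary_solutions_general x y z hxy hyz h
end

section
/- Every triple of positive integers x ≤ y ≤ z satisfying xyz = x² + y² + z² + 7 has x ≥ 3, y ≥ 4 and z ≥ 4. -/
/-!
If `x ≤ 2` then `xyz ≤ 2yz ≤ y² + z²`, which is smaller than the right-hand side. So `x ≥ 3`,
and `y ≤ 3` would force `x = y = 3` and `z² - 9z + 25 = 0`, whose discriminant `81 - 100` is
negative.
-/

theorem sq_add_ne_mul_of_sq_lt_four_mul {R : Type*} [CommRing R] [LinearOrder R]
    [IsStrictOrderedRing R] {b c : R} (hbc : b ^ 2 < 4 * c) (z : R) : z ^ 2 + c ≠ b * z := by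
  intro h
  nlinarith [sq_nonneg (2 * z - b)]

theorem three_le_of_mul_mul_eq_sq_add_sq_add_sq_add {x y z k : ℕ} (hk : 0 < k)
    (h : x * y * z = x ^ 2 + y ^ 2 + z ^ 2 + k) : 3 ≤ x := by
  by_contra! hx
  have : x * y * z ≤ y ^ 2 + z ^ 2 :=
    calc x * y * z ≤ 2 * y * z := by gcongr; omega
      _ ≤ y ^ 2 + z ^ 2 := two_mul_le_add_sq y z
  omega

theorem solutions_lower_bounds_general (x y z : ℕ) (hxy : x ≤ y) (hyz : y ≤ z)
    (h : x * y * z = x ^ 2 + y ^ 2 + z ^ 2 + 7) :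
    3 ≤ x ∧ 4 ≤ y ∧ 4 ≤ z := by
  have hx : 3 ≤ x := three_le_of_mul_mul_eq_sq_add_sq_add_sq_add (by norm_num) h
  have hy : 4 ≤ y := by
    by_contra! hy
    obtain rfl : x = 3 := by omega
    obtain rfl : y = 3 := by omega
    have hz : z ^ 2 + 25 = 9 * z := by linarith
    exact sq_add_ne_mul_of_sq_lt_four_mul (b := (9 : ℤ)) (c := 25) (by norm_num) z
      (by exact_mod_cast hz)
  exact ⟨hx, hy, hy.trans hyz⟩

/-- every positive integer solution x ≤ y ≤ z of xyz = x² + y² + z² + 7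
satisfies x ≥ 3, y ≥ 4, z ≥ 4. -/
theorem solutions_lower_bounds (x y z : ℕ) (hx : 0 < x) (hxy : x ≤ y) (hyz : y ≤ z)
    (h : x * y * z = x ^ 2 + y ^ 2 + z ^ 2 + 7) :
    3 ≤ x ∧ 4 ≤ y ∧ 4 ≤ z :=
  solutions_lower_bounds_general x y z hxy hyz h
end

section
/- Let x, y, z be positive integers with x ≤ y < z and xyz = x² + y² + z² + 7. Then xy − z is a positive integer, the triple (x, xy−z, y) again satisfies the equation x·(xy−z)·y = x² + (xy−z)² + y² + 7, and xy − z ≤ y, with equality xy − z = y occurring only when (x,y,z) = (3,4,8). -/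
/-!
Vieta jumping: `z` and `x * y - z` are the two roots of `t ^ 2 - x * y * t + (x ^ 2 + y ^ 2 + 7)`.
Their product `x ^ 2 + y ^ 2 + 7` is positive, so the second root is positive, and it solves the
equation because it is a root. Evaluating the quadratic at `t = y` gives
`(z - y) * (x * y - z - y) = x ^ 2 + 7 - (x - 2) * y ^ 2`, and since `(x - 2) * y * z = x ^ 2 + (y - z) ^ 2 + 7`
forces `x ≥ 3`, the right-hand side is negative for `x ≤ y` except when `x = 3` and `y ∈ {3, 4}`.
-/

theorem three_le_of_mul_mul_eq {x y z : ℤ} (hy : 0 < y) (hz : 0 < z)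
    (h : x * y * z = x ^ 2 + y ^ 2 + z ^ 2 + 7) : 3 ≤ x := by
  have hprod : 0 < (x - 2) * (y * z) := by nlinarith [sq_nonneg (y - z)]
  have hx2 : 0 < x - 2 := pos_of_mul_pos_left hprod (mul_pos hy hz).le
  omega

theorem eq_three_of_mul_sq_le {x y : ℤ} (hx : 3 ≤ x) (hxy : x ≤ y)
    (h : (x - 2) * y ^ 2 ≤ x ^ 2 + 7) : x = 3 ∧ (y = 3 ∨ y = 4) := by
  have hx3 : x = 3 := by
    by_contra hne
    have h2 : 2 * y ^ 2 ≤ (x - 2) * y ^ 2 := by gcongr; omega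
    nlinarith [mul_le_mul hxy hxy (by omega) (by omega)]
  subst hx3
  have : y ≤ 4 := by nlinarith
  omega

/-- for positive integers x ≤ y < z with xyz = x² + y² + z² + 7, the number
xy − z is a positive integer, (x, xy−z, y) again solves the equation, and xy − z ≤ y with
equality only for (x,y,z) = (3,4,8). -/
theorem vieta_descent (x y z : ℤ) (hx : 0 < x) (hxy : x ≤ y) (hyz : y < z)
    (h : x * y * z = x ^ 2 + y ^ 2 + z ^ 2 + 7) :
    0 < x * y - z ∧
    x * (x * y - z) * y = x ^ 2 + (x * y - z) ^ 2 + y ^ 2 + 7 ∧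
    x * y - z ≤ y ∧
    (x * y - z = y → x = 3 ∧ y = 4 ∧ z = 8) := by
  have hz : 0 < z := by linarith
  have hx3 := three_le_of_mul_mul_eq (by linarith) hz h
  have hprod : z * (x * y - z) = x ^ 2 + y ^ 2 + 7 := by linear_combination h
  have hval : (z - y) * (x * y - z - y) = x ^ 2 + 7 - (x - 2) * y ^ 2 := by linear_combination h
  have hle : x * y - z ≤ y := by
    by_contra! hlt
    obtain ⟨rfl, rfl | rfl⟩ := eq_three_of_mul_sq_le hx3 hxy (by nlinarith)
    · -- `9 * z = z ^ 2 + 25` has discriminant `81 - 100 < 0`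
      nlinarith [sq_nonneg (2 * z - 9)]
    · nlinarith
  refine ⟨pos_of_mul_pos_right (hprod ▸ by positivity) hz.le, by linear_combination h, hle, fun heq ↦ ?_⟩
  rw [heq, sub_self, mul_zero] at hval
  obtain ⟨rfl, rfl | rfl⟩ := eq_three_of_mul_sq_le hx3 hxy (by linarith)
  · norm_num at hval
  · exact ⟨rfl, rfl, by linarith⟩
end

section
/- Let P = (a,b,c,d,e) be a quintuple of positive rationals, let (C₀,C₁,C₂) = φ(P), set m = C₀C₁C₂ − C₁² − C₂² and t = m − C₀² + 2. Then c² − t·cd + d² + C₀·ce + C₀·de + e² = 0. -/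
theorem quadratic_relation_of_ne_zero {K : Type*} [Field K] {a b c d e C0 C1 C2 : K}
    (ha : a ≠ 0) (hb : b ≠ 0) (hc : c ≠ 0) (hd : d ≠ 0)
    (hC0 : C0 = (a ^ 2 + b ^ 2 + c * d) / (a * b))
    (hC1 : C1 = (c ^ 2 * d + a ^ 2 * c + b ^ 2 * d + a * b * e) / (b * c * d))
    (hC2 : C2 = (c * d ^ 2 + a ^ 2 * c + b ^ 2 * d + a * b * e) / (a * c * d)) :
    c ^ 2 - (C0 * C1 * C2 - C1 ^ 2 - C2 ^ 2 - C0 ^ 2 + 2) * (c * d) + d ^ 2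
      + C0 * (c * e) + C0 * (d * e) + e ^ 2 = 0 := by
  subst hC0 hC1 hC2
  field_simp
  ring

theorem quadratic_relation_general (a b c d e C0 C1 C2 m t : ℚ)
    (ha : 0 < a) (hb : 0 < b) (hc : 0 < c) (hd : 0 < d)
    (hC0 : C0 = (a ^ 2 + b ^ 2 + c * d) / (a * b))
    (hC1 : C1 = (c ^ 2 * d + a ^ 2 * c + b ^ 2 * d + a * b * e) / (b * c * d))
    (hC2 : C2 = (c * d ^ 2 + a ^ 2 * c + b ^ 2 * d + a * b * e) / (a * c * d))
    (hm : m = C0 * C1 * C2 - C1 ^ 2 - C2 ^ 2)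
    (ht : t = m - C0 ^ 2 + 2) :
    c ^ 2 - t * (c * d) + d ^ 2 + C0 * (c * e) + C0 * (d * e) + e ^ 2 = 0 := by
  subst ht hm
  exact quadratic_relation_of_ne_zero ha.ne' hb.ne' hc.ne' hd.ne' hC0 hC1 hC2

/-- with (C₀,C₁,C₂) = φ(a,b,c,d,e), m = C₀C₁C₂ − C₁² − C₂² and
t = m − C₀² + 2, one has c² − t·cd + d² + C₀·ce + C₀·de + e² = 0. -/
theorem quadratic_relation (a b c d e C0 C1 C2 m t : ℚ)
    (ha : 0 < a) (hb : 0 < b) (hc : 0 < c) (hd : 0 < d) (he : 0 < e)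
    (hC0 : C0 = (a ^ 2 + b ^ 2 + c * d) / (a * b))
    (hC1 : C1 = (c ^ 2 * d + a ^ 2 * c + b ^ 2 * d + a * b * e) / (b * c * d))
    (hC2 : C2 = (c * d ^ 2 + a ^ 2 * c + b ^ 2 * d + a * b * e) / (a * c * d))
    (hm : m = C0 * C1 * C2 - C1 ^ 2 - C2 ^ 2)
    (ht : t = m - C0 ^ 2 + 2) :
    c ^ 2 - t * (c * d) + d ^ 2 + C0 * (c * e) + C0 * (d * e) + e ^ 2 = 0 :=
  quadratic_relation_general a b c d e C0 C1 C2 m t ha hb hc hd hC0 hC1 hC2 hm ht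
end

section
/- Let P = (a,b,c,d,e) be a quintuple of positive rationals, let (C₀,C₁,C₂) = φ(P) and set m = C₀C₁C₂ − C₁² − C₂². Then m > 0, and the first two coordinates are recovered from the last three by a = (C₂·c + (C₀C₁−C₂)·d + C₁·e)/m and b = ((C₀C₂−C₁)·c + C₁·d + C₂·e)/m. -/
/-!
Clearing denominators in the definition of φ shows that `(a, b)` solves the linear system
`C₂ a - C₁ b = d - c`, `(C₀C₂ - C₁) a - C₂ b = C₀ d + e`, whose determinant is `m`; Cramer's rule
gives the two formulas. The same relations, recombined as `(C₀C₁ - C₂) b = C₀ c + C₁ a + e`, show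
`C₀C₁ > C₂`, so every term of `m a = C₂ c + (C₀C₁ - C₂) d + C₁ e` is positive, hence `m > 0`.
-/

section Phi

variable {K : Type*} [Field K]

def phi0 (a b c d : K) : K := (a ^ 2 + b ^ 2 + c * d) / (a * b)

def phi1 (a b c d e : K) : K := (c ^ 2 * d + a ^ 2 * c + b ^ 2 * d + a * b * e) / (b * c * d)

def phi2 (a b c d e : K) : K := (c * d ^ 2 + a ^ 2 * c + b ^ 2 * d + a * b * e) / (a * c * d)

variable {a b c d : K} (e : K)

theorem phi2_mul_sub_phi1_mul (ha : a ≠ 0) (hb : b ≠ 0) (hc : c ≠ 0) (hd : d ≠ 0) :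
    phi2 a b c d e * a - phi1 a b c d e * b = d - c := by
  unfold phi1 phi2
  field_simp
  ring

theorem phi0_mul_phi2_mul_sub (ha : a ≠ 0) (hb : b ≠ 0) (hc : c ≠ 0) (hd : d ≠ 0) :
    phi0 a b c d * (phi2 a b c d e * a - d) = phi1 a b c d e * a + phi2 a b c d e * b + e := by
  unfold phi0 phi1 phi2
  field_simp
  ring

end Phi

section LinearSystem

theorem det_mul_eq_of_relations {R : Type*} [CommRing R] {C0 C1 C2 a b c d e : R}
    (h₁ : C2 * a - C1 * b = d - c) (h₂ : C0 * (C2 * a - d) = C1 * a + C2 * b + e) :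
    (C0 * C1 * C2 - C1 ^ 2 - C2 ^ 2) * a = C2 * c + (C0 * C1 - C2) * d + C1 * e ∧
    (C0 * C1 * C2 - C1 ^ 2 - C2 ^ 2) * b = (C0 * C2 - C1) * c + C1 * d + C2 * e :=
  ⟨by linear_combination (-C2) * h₁ + C1 * h₂,
    by linear_combination C2 * h₂ - (C0 * C2 - C1) * h₁⟩

variable {R : Type*} [CommRing R] [LinearOrder R] [IsStrictOrderedRing R]
  {C0 C1 C2 a b c d e : R}

theorem mul_sub_pos_of_relations (hC0 : 0 < C0) (hC1 : 0 < C1) (ha : 0 < a) (hb : 0 < b)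
    (hc : 0 < c) (he : 0 < e)
    (h₁ : C2 * a - C1 * b = d - c) (h₂ : C0 * (C2 * a - d) = C1 * a + C2 * b + e) :
    0 < C0 * C1 - C2 := by
  have hmirror : (C0 * C1 - C2) * b = C0 * c + C1 * a + e := by
    linear_combination h₂ - C0 * h₁
  exact pos_of_mul_pos_left (hmirror ▸ by positivity) hb.le

theorem det_pos_of_relations (hC0 : 0 < C0) (hC1 : 0 < C1) (hC2 : 0 < C2) (ha : 0 < a)
    (hb : 0 < b) (hc : 0 < c) (hd : 0 < d) (he : 0 < e)
    (h₁ : C2 * a - C1 * b = d - c) (h₂ : C0 * (C2 * a - d) = C1 * a + C2 * b + e) :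
    0 < C0 * C1 * C2 - C1 ^ 2 - C2 ^ 2 := by
  have hC01 := mul_sub_pos_of_relations hC0 hC1 ha hb hc he h₁ h₂
  have hdet := (det_mul_eq_of_relations h₁ h₂).1
  exact pos_of_mul_pos_left (hdet ▸ by positivity) ha.le

end LinearSystem

/-- with (C₀,C₁,C₂) = φ(a,b,c,d,e) and m = C₀C₁C₂ − C₁² − C₂², one has m > 0,
a = (C₂c + (C₀C₁−C₂)d + C₁e)/m and b = ((C₀C₂−C₁)c + C₁d + C₂e)/m. -/
theorem recover_first_coordinates (a b c d e C0 C1 C2 m : ℚ)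
    (ha : 0 < a) (hb : 0 < b) (hc : 0 < c) (hd : 0 < d) (he : 0 < e)
    (hC0 : C0 = (a ^ 2 + b ^ 2 + c * d) / (a * b))
    (hC1 : C1 = (c ^ 2 * d + a ^ 2 * c + b ^ 2 * d + a * b * e) / (b * c * d))
    (hC2 : C2 = (c * d ^ 2 + a ^ 2 * c + b ^ 2 * d + a * b * e) / (a * c * d))
    (hm : m = C0 * C1 * C2 - C1 ^ 2 - C2 ^ 2) :
    0 < m ∧
    a = (C2 * c + (C0 * C1 - C2) * d + C1 * e) / m ∧
    b = ((C0 * C2 - C1) * c + C1 * d + C2 * e) / m := by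
  have h₁ : C2 * a - C1 * b = d - c := by
    rw [hC1, hC2]; exact phi2_mul_sub_phi1_mul e ha.ne' hb.ne' hc.ne' hd.ne'
  have h₂ : C0 * (C2 * a - d) = C1 * a + C2 * b + e := by
    rw [hC0, hC1, hC2]; exact phi0_mul_phi2_mul_sub e ha.ne' hb.ne' hc.ne' hd.ne'
  have hC0pos : 0 < C0 := hC0 ▸ by positivity
  have hC1pos : 0 < C1 := hC1 ▸ by positivity
  have hC2pos : 0 < C2 := hC2 ▸ by positivity
  have hmpos : 0 < m := hm ▸ det_pos_of_relations hC0pos hC1pos hC2pos ha hb hc hd he h₁ h₂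
  obtain ⟨hma, hmb⟩ := det_mul_eq_of_relations h₁ h₂
  rw [← hm] at hma hmb
  refine ⟨hmpos, ?_, ?_⟩
  · rw [eq_div_iff hmpos.ne', mul_comm, hma]
  · rw [eq_div_iff hmpos.ne', mul_comm, hmb]
end

section
/- Fix a positive integer ε. The set of pairs (u,v) of positive integers satisfying u² − 9uv + v² + 112ε² = 0 with ε dividing both u and v equals the set of pairs (u,v) such that (u,v) = (32ε, 4ε)·Aⁿ for some integer n, where A is the 2×2 integer matrix with rows (9,1) and (−1,0) (which is invertible over ℤ, so integer powers Aⁿ are defined for all n ∈ ℤ). -/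
/-!
The form `x² - 9xy + y²` is invariant under `A`, and right multiplication by `A` and `A⁻¹` are the
Vieta jumps `(x, y) ↦ (9x - y, x)` and `(x, y) ↦ (y, 9y - x)`, which keep a positive solution of
`x² - 9xy + y² = c < 0` positive. For `c = -112` both coordinates of a positive solution are
at least `4`, so the larger one is at least eight times the smaller one and the jump replacing it
strictly decreases `x + y`. The descent stops at `x = y`, which forces `(4, 4) = (32, 4) A⁻¹`.
Writing `(u, v) = ε (x, y)` reduces everything to `ε = 1`.
-/

/-- The matrix A = [[9,1],[−1,0]], invertible over ℤ (with inverse [[0,−1],[1,9]]),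
as a unit of the ring of 2×2 integer matrices, so that Aⁿ is defined for all n ∈ ℤ. -/
def matA : (Matrix (Fin 2) (Fin 2) ℤ)ˣ where
  val := !![9, 1; -1, 0]
  inv := !![0, -1; 1, 9]
  val_inv := by
    rw [Matrix.mul_fin_two, Matrix.one_fin_two]; norm_num
  inv_val := by
    rw [Matrix.mul_fin_two, Matrix.one_fin_two]; norm_num

open scoped Matrix

def posSol (c : ℤ) : Set (Fin 2 → ℤ) :=
  {v | 0 < v 0 ∧ 0 < v 1 ∧ v 0 ^ 2 - 9 * v 0 * v 1 + v 1 ^ 2 = c}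

lemma vecMul_matA (v : Fin 2 → ℤ) :
    v ᵥ* (matA : Matrix (Fin 2) (Fin 2) ℤ) = ![9 * v 0 - v 1, v 0] := by
  ext i; fin_cases i <;> simp [matA, Matrix.vecMul, dotProduct]; ring

lemma vecMul_matA_inv (v : Fin 2 → ℤ) :
    v ᵥ* (↑matA⁻¹ : Matrix (Fin 2) (Fin 2) ℤ) = ![v 1, 9 * v 1 - v 0] := by
  ext i; fin_cases i <;> simp [matA, Matrix.vecMul, dotProduct]; ring

lemma lt_nine_mul_of_neg {x y : ℤ} (hx : 0 < x) (h : x ^ 2 - 9 * x * y + y ^ 2 < 0) :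
    y < 9 * x := by
  nlinarith

lemma vecMul_matA_mem {c : ℤ} (hc : c < 0) {v : Fin 2 → ℤ} (hv : v ∈ posSol c) :
    v ᵥ* (matA : Matrix (Fin 2) (Fin 2) ℤ) ∈ posSol c := by
  obtain ⟨hx, hy, he⟩ := hv
  rw [vecMul_matA]
  refine ⟨?_, by simpa using hx, ?_⟩
  · simpa using lt_nine_mul_of_neg hx (he ▸ hc)
  · simp only [Matrix.cons_val_zero, Matrix.cons_val_one]; linear_combination he

lemma vecMul_matA_inv_mem {c : ℤ} (hc : c < 0) {v : Fin 2 → ℤ} (hv : v ∈ posSol c) :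
    v ᵥ* (↑matA⁻¹ : Matrix (Fin 2) (Fin 2) ℤ) ∈ posSol c := by
  obtain ⟨hx, hy, he⟩ := hv
  rw [vecMul_matA_inv]
  refine ⟨by simpa using hy, ?_, ?_⟩
  · simpa using lt_nine_mul_of_neg hy (by linear_combination he + hc)
  · simp only [Matrix.cons_val_zero, Matrix.cons_val_one]; linear_combination he

lemma vecMul_zpow_matA_mem {c : ℤ} (hc : c < 0) {v : Fin 2 → ℤ} (hv : v ∈ posSol c) (n : ℤ) :
    v ᵥ* (↑(matA ^ n) : Matrix (Fin 2) (Fin 2) ℤ) ∈ posSol c := by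
  induction n using Int.induction_on with
  | zero => simpa using hv
  | succ k ih =>
    rw [zpow_add_one, Units.val_mul, ← Matrix.vecMul_vecMul]
    exact vecMul_matA_mem hc ih
  | pred k ih =>
    rw [zpow_sub_one, Units.val_mul, ← Matrix.vecMul_vecMul]
    exact vecMul_matA_inv_mem hc ih

lemma four_le_of_pell {x y : ℤ} (hy : 0 < y)
    (h : x ^ 2 - 9 * x * y + y ^ 2 = -112) : 4 ≤ y := by
  by_contra! hy4
  interval_cases y
  · nlinarith [sq_nonneg (2 * x - 9)]
  · nlinarith [sq_nonneg (x - 9)]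
  · -- modulo 3 the equation reads `x² + 1 = 0`
    have h3 := congrArg (Int.cast : ℤ → ZMod 3) h
    push_cast at h3
    generalize (x : ZMod 3) = a at h3
    revert a; decide

lemma eight_mul_le_of_pell {x y : ℤ} (hy : 0 < y) (hyx : y < x)
    (h : x ^ 2 - 9 * x * y + y ^ 2 = -112) : 8 * y ≤ x := by
  have := four_le_of_pell hy h
  -- `7y² ≥ 112` turns the equation into `(x - y)² ≥ 7y(x - y)`
  nlinarith

theorem exists_zpow_of_mem_posSol {v : Fin 2 → ℤ} (hv : v ∈ posSol (-112)) :
    ∃ n : ℤ, v = ![32, 4] ᵥ* (↑(matA ^ n) : Matrix (Fin 2) (Fin 2) ℤ) := by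
  induction hs : (v 0 + v 1).toNat using Nat.strong_induction_on generalizing v with
  | _ s ih =>
  obtain ⟨hx, hy, he⟩ := hv
  rcases lt_trichotomy (v 0) (v 1) with hlt | heq | hgt
  · have h8 : 8 * v 0 ≤ v 1 := eight_mul_le_of_pell hx hlt (by linear_combination he)
    have hw := vecMul_matA_mem (by norm_num) ⟨hx, hy, he⟩
    rw [vecMul_matA] at hw
    obtain ⟨n, hn⟩ := ih _ (by simp only [Matrix.cons_val_zero, Matrix.cons_val_one]; omega) hw rfl
    refine ⟨n - 1, ?_⟩
    rw [_root_.zpow_sub_one, Units.val_mul, ← Matrix.vecMul_vecMul, ← hn, vecMul_matA_inv]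
    ext i; fin_cases i <;> simp
  · have h4 : v 0 = 4 := by nlinarith
    refine ⟨-1, ?_⟩
    rw [zpow_neg_one, vecMul_matA_inv]
    ext i; fin_cases i <;> simp [h4, ← heq]
  · have h8 : 8 * v 1 ≤ v 0 := eight_mul_le_of_pell hy hgt he
    have hw := vecMul_matA_inv_mem (by norm_num) ⟨hx, hy, he⟩
    rw [vecMul_matA_inv] at hw
    obtain ⟨n, hn⟩ := ih _ (by simp only [Matrix.cons_val_zero, Matrix.cons_val_one]; omega) hw rfl
    refine ⟨n + 1, ?_⟩
    rw [_root_.zpow_add_one, Units.val_mul, ← Matrix.vecMul_vecMul, ← hn, vecMul_matA]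
    ext i; fin_cases i <;> simp

lemma mem_posSol_iff_exists_zpow {v : Fin 2 → ℤ} :
    v ∈ posSol (-112) ↔ ∃ n : ℤ, v = ![32, 4] ᵥ* (↑(matA ^ n) : Matrix (Fin 2) (Fin 2) ℤ) := by
  refine ⟨exists_zpow_of_mem_posSol, ?_⟩
  rintro ⟨n, rfl⟩
  exact vecMul_zpow_matA_mem (by norm_num) ⟨by simp, by simp, by norm_num⟩ n

lemma scaled_pell_iff_exists_smul_mem_posSol {ε : ℤ} (hε : 0 < ε) {u v : ℤ} :
    (0 < u ∧ 0 < v ∧ u ^ 2 - 9 * u * v + v ^ 2 + 112 * ε ^ 2 = 0 ∧ ε ∣ u ∧ ε ∣ v) ↔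
      ∃ w ∈ posSol (-112), ![u, v] = ε • w := by
  constructor
  · rintro ⟨hu, hv, he, ⟨c, rfl⟩, ⟨d, rfl⟩⟩
    refine ⟨![c, d], ⟨?_, ?_, ?_⟩, by simp⟩
    · simpa using pos_of_mul_pos_right hu hε.le
    · simpa using pos_of_mul_pos_right hv hε.le
    · have : ε ^ 2 * (c ^ 2 - 9 * c * d + d ^ 2 + 112) = 0 := by linear_combination he
      simp only [Matrix.cons_val_zero, Matrix.cons_val_one]
      linear_combination (mul_eq_zero.mp this).resolve_left (by positivity)
  · rintro ⟨w, ⟨hx, hy, he⟩, hw⟩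
    have hu : u = ε * w 0 := by simpa using congrFun hw 0
    have hv : v = ε * w 1 := by simpa using congrFun hw 1
    subst hu hv
    exact ⟨by positivity, by positivity, by linear_combination ε ^ 2 * he,
      dvd_mul_right _ _, dvd_mul_right _ _⟩

/-- the pairs (u,v) of positive integers with u² − 9uv + v² + 112ε² = 0 and
ε ∣ u, ε ∣ v are exactly the pairs (u,v) = (32ε, 4ε)·Aⁿ, n ∈ ℤ. -/
theorem pell_orbit (ε : ℕ) (hε : 0 < ε) :
    {p : ℤ × ℤ | 0 < p.1 ∧ 0 < p.2 ∧
        p.1 ^ 2 - 9 * p.1 * p.2 + p.2 ^ 2 + 112 * (ε : ℤ) ^ 2 = 0 ∧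
        (ε : ℤ) ∣ p.1 ∧ (ε : ℤ) ∣ p.2} =
    {p : ℤ × ℤ | ∃ n : ℤ,
        ![p.1, p.2] = Matrix.vecMul ![32 * (ε : ℤ), 4 * (ε : ℤ)]
          ((matA ^ n : (Matrix (Fin 2) (Fin 2) ℤ)ˣ) : Matrix (Fin 2) (Fin 2) ℤ)} := by
  have hscale : ![32 * (ε : ℤ), 4 * (ε : ℤ)] = (ε : ℤ) • ![32, 4] := by
    ext i; fin_cases i <;> simp [mul_comm]
  ext ⟨u, v⟩
  simp only [Set.mem_ofPred_eq, scaled_pell_iff_exists_smul_mem_posSol (Int.natCast_pos.mpr hε),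
    mem_posSol_iff_exists_zpow, hscale, Matrix.smul_vecMul]
  exact ⟨fun ⟨_, ⟨n, hwn⟩, hw⟩ => ⟨n, hwn ▸ hw⟩, fun ⟨n, hn⟩ => ⟨_, ⟨n, rfl⟩, hn⟩⟩
end

section
/- Fix a positive integer ε. The set of pairs (x,y) of positive integers satisfying x² − 9xy + y² + 3εx + 3εy + ε² = 0 with ε dividing both x and y equals the set of pairs (x,y) such that (x, y, ε) = (ε, ε, ε)·Mⁿ for some integer n, where M is the 3×3 integer matrix with rows (9,1,0), (−1,0,0), (−3,0,1) (which is invertible over ℤ, so integer powers Mⁿ are defined for all n ∈ ℤ). -/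
/-- The matrix M = [[9,1,0],[−1,0,0],[−3,0,1]], invertible over ℤ
(with inverse [[0,−1,0],[1,9,0],[0,−3,1]]), as a unit of the ring of 3×3 integer matrices,
so that Mⁿ is defined for all n ∈ ℤ. -/
def matM : (Matrix (Fin 3) (Fin 3) ℤ)ˣ where
  val := !![9, 1, 0; -1, 0, 0; -3, 0, 1]
  inv := !![0, -1, 0; 1, 9, 0; 0, -3, 1]
  val_inv := by
    rw [Matrix.mul_fin_three, Matrix.one_fin_three]; norm_num
  inv_val := by
    rw [Matrix.mul_fin_three, Matrix.one_fin_three]; norm_num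

/-!
Write `Q(x, y) = x² − 9xy + y² + 3εx + 3εy + ε²`. For fixed `x`, the roots of `Q(x, ·)` sum to
`9x − 3ε`, so the Vieta jump `(x, y) ↦ (9x − y − 3ε, x)` preserves `Q = 0`; on `(x, y, ε)` it is
right multiplication by `M`. It also preserves positivity (the product of the two roots is
`x² + 3εx + ε² > 0`) and divisibility by `ε`. Conversely, a solution with `x < y` jumps to one with
`9x − y − 3ε ≤ x`, because `(x − y)(x − (9x − y − 3ε)) = −(7x + ε)(x − ε)` and `ε ≤ x`; so `x + y`
strictly decreases until `x = y`, which forces `(x, y) = (ε, ε)`.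
-/

namespace HyperbolaOrbit

def vietaJump (ε : ℤ) : Equiv.Perm (ℤ × ℤ) where
  toFun p := (9 * p.1 - p.2 - 3 * ε, p.1)
  invFun p := (p.2, 9 * p.2 - p.1 - 3 * ε)
  left_inv p := Prod.ext rfl (by dsimp only; ring)
  right_inv p := Prod.ext (by dsimp only; ring) rfl

variable {ε : ℤ}

@[simp]
lemma vietaJump_apply (p : ℤ × ℤ) : vietaJump ε p = (9 * p.1 - p.2 - 3 * ε, p.1) := rfl

lemma vietaJump_inv_apply (p : ℤ × ℤ) : (vietaJump ε)⁻¹ p = (vietaJump ε p.swap).swap := rfl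

lemma vecMul_matM (x y : ℤ) :
    Matrix.vecMul ![x, y, ε] (matM : Matrix (Fin 3) (Fin 3) ℤ) =
      ![(vietaJump ε (x, y)).1, (vietaJump ε (x, y)).2, ε] := by
  ext j; fin_cases j <;> simp [matM, Matrix.vecMul, dotProduct, Fin.sum_univ_three]
  ring

lemma vecMul_matM_inv (x y : ℤ) :
    Matrix.vecMul ![x, y, ε] ((matM⁻¹ : (Matrix (Fin 3) (Fin 3) ℤ)ˣ) : Matrix (Fin 3) (Fin 3) ℤ) =
      ![((vietaJump ε)⁻¹ (x, y)).1, ((vietaJump ε)⁻¹ (x, y)).2, ε] := by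
  rw [show ((matM⁻¹ : (Matrix (Fin 3) (Fin 3) ℤ)ˣ) : Matrix (Fin 3) (Fin 3) ℤ) =
    !![0, -1, 0; 1, 9, 0; 0, -3, 1] from rfl]
  ext j; fin_cases j <;> simp [vietaJump_inv_apply, Matrix.vecMul, dotProduct, Fin.sum_univ_three]
  ring

lemma vecMul_matM_zpow (x y : ℤ) (n : ℤ) :
    Matrix.vecMul ![x, y, ε] ((matM ^ n : (Matrix (Fin 3) (Fin 3) ℤ)ˣ) : Matrix (Fin 3) (Fin 3) ℤ) =
      ![((vietaJump ε ^ n) (x, y)).1, ((vietaJump ε ^ n) (x, y)).2, ε] := by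
  induction n using Int.induction_on with
  | zero => simp
  | succ n ih =>
    rw [zpow_add_one, Units.val_mul, ← Matrix.vecMul_vecMul, ih, vecMul_matM, ← mul_self_zpow,
      Equiv.Perm.mul_apply]
  | pred n ih =>
    rw [zpow_sub_one, Units.val_mul, ← Matrix.vecMul_vecMul, ih, vecMul_matM_inv, sub_eq_neg_add,
      zpow_add, zpow_neg_one, Equiv.Perm.mul_apply]

def IsSolution (ε : ℤ) (p : ℤ × ℤ) : Prop :=
  0 < p.1 ∧ 0 < p.2 ∧
    p.1 ^ 2 - 9 * p.1 * p.2 + p.2 ^ 2 + 3 * ε * p.1 + 3 * ε * p.2 + ε ^ 2 = 0 ∧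
    ε ∣ p.1 ∧ ε ∣ p.2

lemma isSolution_self (hε : 0 < ε) : IsSolution ε (ε, ε) :=
  ⟨hε, hε, by ring, dvd_rfl, dvd_rfl⟩

section

variable {p : ℤ × ℤ}

lemma IsSolution.swap (hp : IsSolution ε p) : IsSolution ε p.swap := by
  obtain ⟨hx, hy, hQ, hdx, hdy⟩ := hp
  exact ⟨hy, hx, by simp only [Prod.fst_swap, Prod.snd_swap]; linear_combination hQ, hdy, hdx⟩

lemma IsSolution.jump (hε : 0 ≤ ε) (hp : IsSolution ε p) : IsSolution ε (vietaJump ε p) := by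
  obtain ⟨hx, hy, hQ, hdx, hdy⟩ := hp
  have hprod : (9 * p.1 - p.2 - 3 * ε) * p.2 = p.1 ^ 2 + 3 * ε * p.1 + ε ^ 2 := by
    linear_combination -hQ
  have hpos : 0 < 9 * p.1 - p.2 - 3 * ε :=
    pos_of_mul_pos_left (hprod ▸ by positivity) hy.le
  exact ⟨hpos, hx, by simp only [vietaJump_apply]; linear_combination hQ,
    by simp only [vietaJump_apply]; exact ((hdx.mul_left 9).sub hdy).sub (dvd_mul_left ε 3), hdx⟩

lemma IsSolution.jump_inv (hε : 0 ≤ ε) (hp : IsSolution ε p) :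
    IsSolution ε ((vietaJump ε)⁻¹ p) := by
  rw [vietaJump_inv_apply]
  exact (hp.swap.jump hε).swap

lemma IsSolution.jump_zpow (hε : 0 ≤ ε) (hp : IsSolution ε p) (n : ℤ) :
    IsSolution ε ((vietaJump ε ^ n) p) := by
  induction n using Int.induction_on generalizing p with
  | zero => exact hp
  | succ n ih => rw [zpow_add_one, Equiv.Perm.mul_apply]; exact ih (hp.jump hε)
  | pred n ih => rw [zpow_sub_one, Equiv.Perm.mul_apply]; exact ih (hp.jump_inv hε)

lemma IsSolution.jump_sum_lt (hε : 0 ≤ ε) (hp : IsSolution ε p) (hlt : p.1 < p.2) :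
    (vietaJump ε p).1 + (vietaJump ε p).2 < p.1 + p.2 := by
  obtain ⟨hx, -, hQ, hdx, -⟩ := hp
  have hεx : ε ≤ p.1 := Int.le_of_dvd hx hdx
  have hfactor : (p.1 - p.2) * (p.1 - (9 * p.1 - p.2 - 3 * ε)) = -(7 * p.1 + ε) * (p.1 - ε) := by
    linear_combination -hQ
  have hjump : 9 * p.1 - p.2 - 3 * ε ≤ p.1 := by nlinarith
  simp only [vietaJump_apply]
  linarith

lemma IsSolution.eq_of_fst_eq_snd (hε : 0 ≤ ε) (hp : IsSolution ε p) (heq : p.1 = p.2) :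
    p = (ε, ε) := by
  obtain ⟨hx, -, hQ, -, -⟩ := hp
  have hfactor : (p.1 - ε) * (7 * p.1 + ε) = 0 := by rw [← heq] at hQ; linear_combination -hQ
  have hfst : p.1 = ε := by rcases mul_eq_zero.mp hfactor with h | h <;> linarith
  exact Prod.ext hfst (heq ▸ hfst)

lemma IsSolution.exists_zpow_eq (hε : 0 ≤ ε) (hp : IsSolution ε p) :
    ∃ n : ℤ, (vietaJump ε ^ n) (ε, ε) = p := by
  induction h : (p.1 + p.2).toNat using Nat.strong_induction_on generalizing p with
  | _ k ih =>
  have hpos : 0 < p.1 + p.2 := add_pos hp.1 hp.2.1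
  rcases lt_trichotomy p.1 p.2 with hlt | heq | hgt
  · have hsum := hp.jump_sum_lt hε hlt
    obtain ⟨n, hn⟩ := ih _ (by omega) (hp.jump hε) rfl
    refine ⟨-1 + n, ?_⟩
    rw [zpow_add, zpow_neg_one, Equiv.Perm.mul_apply, hn, Equiv.Perm.coe_inv,
      Equiv.symm_apply_apply]
  · exact ⟨0, (hp.eq_of_fst_eq_snd hε heq).symm⟩
  · have hsum : ((vietaJump ε)⁻¹ p).1 + ((vietaJump ε)⁻¹ p).2 < p.1 + p.2 := by
      simpa [vietaJump_inv_apply, add_comm] using hp.swap.jump_sum_lt hε hgt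
    obtain ⟨n, hn⟩ := ih _ (by omega) (hp.jump_inv hε) rfl
    refine ⟨1 + n, ?_⟩
    rw [zpow_one_add, Equiv.Perm.mul_apply, hn, Equiv.Perm.coe_inv, Equiv.apply_symm_apply]

end

lemma isSolution_iff_exists_zpow (hε : 0 < ε) (p : ℤ × ℤ) :
    IsSolution ε p ↔ ∃ n : ℤ, (vietaJump ε ^ n) (ε, ε) = p :=
  ⟨IsSolution.exists_zpow_eq hε.le,
    fun ⟨n, hn⟩ => hn ▸ (isSolution_self hε).jump_zpow hε.le n⟩

end HyperbolaOrbit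

/-- the pairs (x,y) of positive integers with
x² − 9xy + y² + 3εx + 3εy + ε² = 0 and ε ∣ x, ε ∣ y are exactly the pairs (x,y) with
(x, y, ε) = (ε, ε, ε)·Mⁿ, n ∈ ℤ. -/
theorem hyperbola_orbit (ε : ℕ) (hε : 0 < ε) :
    {p : ℤ × ℤ | 0 < p.1 ∧ 0 < p.2 ∧
        p.1 ^ 2 - 9 * p.1 * p.2 + p.2 ^ 2 + 3 * (ε : ℤ) * p.1 + 3 * (ε : ℤ) * p.2 +
          (ε : ℤ) ^ 2 = 0 ∧
        (ε : ℤ) ∣ p.1 ∧ (ε : ℤ) ∣ p.2} =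
    {p : ℤ × ℤ | ∃ n : ℤ,
        ![p.1, p.2, (ε : ℤ)] = Matrix.vecMul ![(ε : ℤ), (ε : ℤ), (ε : ℤ)]
          ((matM ^ n : (Matrix (Fin 3) (Fin 3) ℤ)ˣ) : Matrix (Fin 3) (Fin 3) ℤ)} := by
  ext p
  change HyperbolaOrbit.IsSolution ε p ↔ _
  simp only [HyperbolaOrbit.isSolution_iff_exists_zpow (Int.natCast_pos.mpr hε),
    Set.mem_ofPred_eq, HyperbolaOrbit.vecMul_matM_zpow, Matrix.vecCons_inj, and_true,
    Prod.ext_iff, eq_comm]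
end

section
/- Fix a positive integer ε. A quintuple P = (a,b,c,d,ε) of positive integers satisfies φ(P) = (3,4,4) and ε ∣ a, ε ∣ b, ε ∣ c, ε ∣ d if and only if P = β^{3n}(ε,ε,ε,ε,ε) for some integer n. That is, the set S(3,4,4) := φ⁻¹(3,4,4) ∩ {(a,b,c,d,ε) ∈ ℕ₊⁵ : every component divisible by ε} equals the orbit of (ε,ε,ε,ε,ε) under the subgroup ⟨β³⟩. -/
def Conic344 {R : Type*} [CommRing R] (c d e : R) : Prop :=
  c ^ 2 + d ^ 2 + e ^ 2 + 3 * (c + d) * e = 9 * c * d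

namespace Conic344

variable {R : Type*} [CommRing R] {c d e : R}

theorem symm (h : Conic344 c d e) : Conic344 d c e := by
  unfold Conic344 at *; linear_combination h

theorem vieta (h : Conic344 c d e) : Conic344 (9 * c - d - 3 * e) c e := by
  unfold Conic344 at *; linear_combination h

theorem mul (h : Conic344 c d e) (t : R) : Conic344 (t * c) (t * d) (t * e) := by
  unfold Conic344 at *; linear_combination t ^ 2 * h

theorem of_mul [IsDomain R] {t : R} (ht : t ≠ 0) (h : Conic344 (t * c) (t * d) (t * e)) :
    Conic344 c d e := by
  unfold Conic344 at *
  apply mul_left_cancel₀ (pow_ne_zero 2 ht)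
  linear_combination h

end Conic344

theorem conic344_intCast_iff {c d e : ℤ} :
    Conic344 (c : ℚ) (d : ℚ) (e : ℚ) ↔ Conic344 c d e := by
  unfold Conic344; norm_cast

def conicSeq : ℕ → ℤ
  | 0 => 1
  | 1 => 1
  | n + 2 => 9 * conicSeq (n + 1) - conicSeq n - 3

theorem conic344_conicSeq : ∀ n, Conic344 (conicSeq (n + 1)) (conicSeq n) 1
  | 0 => by norm_num [Conic344, conicSeq]
  | n + 1 => by simpa [conicSeq] using (conic344_conicSeq n).vieta

theorem conicSeq_pos_and_le_succ : ∀ n, 0 < conicSeq n ∧ conicSeq n ≤ conicSeq (n + 1)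
  | 0 => by norm_num [conicSeq]
  | n + 1 => by
    obtain ⟨hpos, hle⟩ := conicSeq_pos_and_le_succ n
    simp only [conicSeq]
    omega

theorem conicSeq_pos (n : ℕ) : 0 < conicSeq n := (conicSeq_pos_and_le_succ n).1

theorem conicSeq_modEq_one : ∀ n, conicSeq n ≡ 1 [ZMOD 4]
  | 0 => rfl
  | 1 => rfl
  | n + 2 => by
    have h₀ := conicSeq_modEq_one n
    have h₁ := conicSeq_modEq_one (n + 1)
    unfold Int.ModEq at *
    simp only [conicSeq]
    omega

/-- Vieta descent: the partner `9d - 3 - c` of `c` lies in `(0, d]`, so recursion on `c` ends at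
the only diagonal point `(1, 1)`. -/
theorem Conic344.exists_conicSeq {c d : ℤ} (hd : 0 < d) (hdc : d ≤ c) (h : Conic344 c d 1) :
    ∃ n, c = conicSeq (n + 1) ∧ d = conicSeq n := by
  rcases hdc.eq_or_lt with rfl | hlt
  · have hfac : (d - 1) * (7 * d + 1) = 0 := by unfold Conic344 at h; linear_combination -h
    have hd1 : d = 1 := by
      rcases mul_eq_zero.1 hfac with h' | h' <;> omega
    exact ⟨0, by simp [conicSeq, hd1], by simp [conicSeq, hd1]⟩
  · have hmul : c * (9 * d - c - 3) = d ^ 2 + 3 * d + 1 := by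
      unfold Conic344 at h; linear_combination -h
    have hpos : 0 < 9 * d - c - 3 := by nlinarith
    have hle : 9 * d - c - 3 ≤ d := by
      by_contra! hgt
      nlinarith [mul_nonneg (by omega : (0 : ℤ) ≤ c - d - 1)
        (by omega : (0 : ℤ) ≤ 9 * d - c - 3 - d - 1)]
    have h' : Conic344 d (9 * d - c - 3) 1 := by simpa using h.symm.vieta.symm
    obtain ⟨n, hn₁, hn₀⟩ := h'.exists_conicSeq hpos hle
    exact ⟨n + 1, by rw [conicSeq, ← hn₁, ← hn₀]; ring, hn₁⟩
termination_by c.toNat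
decreasing_by omega

theorem conic344_iff_exists_conicSeq {c d : ℤ} (hc : 0 < c) (hd : 0 < d) :
    Conic344 c d 1 ↔ ∃ n, (c = conicSeq (n + 1) ∧ d = conicSeq n) ∨
      (c = conicSeq n ∧ d = conicSeq (n + 1)) := by
  constructor
  · intro h
    rcases le_total d c with hdc | hcd
    · obtain ⟨n, h₁, h₀⟩ := h.exists_conicSeq hd hdc
      exact ⟨n, .inl ⟨h₁, h₀⟩⟩
    · obtain ⟨n, h₁, h₀⟩ := h.symm.exists_conicSeq hc hcd
      exact ⟨n, .inr ⟨h₀, h₁⟩⟩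
  · rintro ⟨n, ⟨rfl, rfl⟩ | ⟨rfl, rfl⟩⟩
    exacts [conic344_conicSeq n, (conic344_conicSeq n).symm]

def liftConic (c d e : ℚ) : Q5 := ((c + 2 * d + e) / 4, (2 * c + d + e) / 4, c, d, e)

theorem phi_eq_344_iff {a b c d e : ℚ} (ha : a ≠ 0) (hb : b ≠ 0) (hc : c ≠ 0) (hd : d ≠ 0) :
    phi (a, b, c, d, e) = (3, 4, 4) ↔ (a, b, c, d, e) = liftConic c d e ∧ Conic344 c d e := by
  simp only [phi, phiC0, phiC1, phiC2, liftConic, Conic344, Prod.mk.injEq, and_true,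
    div_eq_iff (mul_ne_zero ha hb), div_eq_iff (mul_ne_zero (mul_ne_zero hb hc) hd),
    div_eq_iff (mul_ne_zero (mul_ne_zero ha hc) hd)]
  constructor
  · rintro ⟨h₀, h₁, h₂⟩
    have hcd : c - d = 4 * (b - a) := by
      have : c * d * (c - d - 4 * (b - a)) = 0 := by linear_combination h₁ - h₂
      simpa [hc, hd, sub_eq_zero] using this
    have hab : 3 * c + e + 4 * a = 8 * b := by
      have : a * b * (3 * c + e + 4 * a - 8 * b) = 0 := by
        linear_combination h₁ - (c - 4 * b) * h₀ + b ^ 2 * hcd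
      simpa [ha, hb, sub_eq_zero] using this
    obtain rfl : a = (c + 2 * d + e) / 4 := by linarith
    obtain rfl : b = (2 * c + d + e) / 4 := by linarith
    exact ⟨⟨rfl, rfl⟩, by linear_combination (-16) * h₀⟩
  · rintro ⟨⟨rfl, rfl⟩, h⟩
    refine ⟨?_, ?_, ?_⟩
    · linear_combination (-1 / 16) * h
    · linear_combination (c + d + e) / 16 * h
    · linear_combination (c + d + e) / 16 * h

theorem actBeta_of_mul_eq {a b c d e x : ℚ} (hd : d ≠ 0) (h : d * x = a * c + b * e) :
    actBeta (a, b, c, d, e) = (b, c, x, a, e) := by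
  rw [actBeta, ← h, mul_div_cancel_left₀ x hd]

theorem actBeta_iterate_three_liftConic {c d e : ℚ} (hc : 0 < c) (hd : 0 < d) (he : 0 < e)
    (h : Conic344 c d e) : actBeta^[3] (liftConic c d e) = liftConic (9 * c - d - 3 * e) c e := by
  unfold Conic344 at h
  have ha : (c + 2 * d + e) / 4 ≠ 0 := by positivity
  have hb : (2 * c + d + e) / 4 ≠ 0 := by positivity
  show actBeta (actBeta (actBeta (liftConic c d e))) = _
  rw [liftConic,
    actBeta_of_mul_eq hd.ne' (x := (11 * c - d - 2 * e) / 4) (by linear_combination (-1 / 4) * h),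
    actBeta_of_mul_eq ha (x := (19 * c - 2 * d - 5 * e) / 4) (by linear_combination (-3 / 16) * h),
    actBeta_of_mul_eq hb (x := 9 * c - d - 3 * e) (by linear_combination (-1 / 4) * h), liftConic]
  simp only [Prod.mk.injEq, and_true]
  constructor <;> ring

def swapPairs : Q5 → Q5
  | (a, b, c, d, e) => (b, a, d, c, e)

theorem semiconj_swapPairs_actBeta : Function.Semiconj swapPairs actBeta actBetaInv := by
  rintro ⟨a, b, c, d, e⟩
  show (c, b, a, (a * c + b * e) / d, e) = (c, b, a, (b * e + a * c) / d, e)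
  rw [add_comm]

theorem swapPairs_liftConic (c d e : ℚ) : swapPairs (liftConic c d e) = liftConic d c e := by
  simp only [swapPairs, liftConic, Prod.mk.injEq, and_true]
  constructor <;> ring

theorem actBeta_iterate_three_mul {e : ℚ} (he : 0 < e) (n : ℕ) :
    actBeta^[3 * n] (e, e, e, e, e) = liftConic (e * conicSeq (n + 1)) (e * conicSeq n) e := by
  induction n with
  | zero => norm_num [liftConic, conicSeq]; constructor <;> ring
  | succ n ih =>
    have hpos (m : ℕ) : 0 < e * conicSeq m := mul_pos he (by exact_mod_cast conicSeq_pos m)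
    have hconic : Conic344 (e * conicSeq (n + 1)) (e * conicSeq n) e := by
      simpa using Conic344.mul (conic344_intCast_iff.2 (conic344_conicSeq n)) e
    rw [show 3 * (n + 1) = 3 + 3 * n by ring, Function.iterate_add_apply, ih,
      actBeta_iterate_three_liftConic (hpos _) (hpos _) he hconic]
    congr 1
    push_cast [conicSeq]
    ring

theorem actBetaInv_iterate_three_mul {e : ℚ} (he : 0 < e) (n : ℕ) :
    actBetaInv^[3 * n] (e, e, e, e, e) = liftConic (e * conicSeq n) (e * conicSeq (n + 1)) e := by
  have h := semiconj_swapPairs_actBeta.iterate_right (3 * n) (e, e, e, e, e)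
  rw [actBeta_iterate_three_mul he, swapPairs_liftConic] at h
  exact h.symm

theorem dvd_of_natCast_eq_mul {ε a : ℕ} {k : ℤ} (h : (a : ℚ) = ε * k) : ε ∣ a :=
  Int.natCast_dvd_natCast.mp ⟨k, by exact_mod_cast h⟩

theorem exists_conic344_of_phi_eq {ε a b c d : ℕ} (hε : 0 < ε) (ha : 0 < a) (hb : 0 < b)
    (hc : 0 < c) (hd : 0 < d) (h : phi ((a : ℚ), (b : ℚ), (c : ℚ), (d : ℚ), (ε : ℚ)) = (3, 4, 4))
    (hεc : ε ∣ c) (hεd : ε ∣ d) :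
    ∃ x y : ℤ, 0 < x ∧ 0 < y ∧ Conic344 x y 1 ∧
      ((a : ℚ), (b : ℚ), (c : ℚ), (d : ℚ), (ε : ℚ)) = liftConic (ε * x) (ε * y) ε := by
  rw [phi_eq_344_iff (by positivity) (by positivity) (by positivity) (by positivity)] at h
  obtain ⟨hP, hconic⟩ := h
  obtain ⟨x, rfl⟩ := hεc
  obtain ⟨y, rfl⟩ := hεd
  refine ⟨x, y, by exact_mod_cast Nat.pos_of_mul_pos_left hc,
    by exact_mod_cast Nat.pos_of_mul_pos_left hd, ?_, by simpa using hP⟩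
  rw [← conic344_intCast_iff]
  apply Conic344.of_mul (t := (ε : ℚ)) (by positivity)
  simpa using hconic

theorem phi_eq_and_dvd_of_eq_liftConic {ε a b c d : ℕ} (ha : 0 < a) (hb : 0 < b) (hc : 0 < c)
    (hd : 0 < d) {x y : ℤ} (hconic : Conic344 x y 1) (hx : x ≡ 1 [ZMOD 4]) (hy : y ≡ 1 [ZMOD 4])
    (hP : ((a : ℚ), (b : ℚ), (c : ℚ), (d : ℚ), (ε : ℚ)) = liftConic (ε * x) (ε * y) ε) :
    phi ((a : ℚ), (b : ℚ), (c : ℚ), (d : ℚ), (ε : ℚ)) = (3, 4, 4) ∧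
      ε ∣ a ∧ ε ∣ b ∧ ε ∣ c ∧ ε ∣ d := by
  rw [phi_eq_344_iff (by positivity) (by positivity) (by positivity) (by positivity)]
  have hP' := hP
  simp only [liftConic, Prod.mk.injEq] at hP'
  obtain ⟨ha', hb', hc', hd', -⟩ := hP'
  unfold Int.ModEq at hx hy
  obtain ⟨k, hk⟩ : ∃ k, x + 2 * y + 1 = 4 * k := ⟨(x + 2 * y + 1) / 4, by omega⟩
  obtain ⟨l, hl⟩ : ∃ l, 2 * x + y + 1 = 4 * l := ⟨(2 * x + y + 1) / 4, by omega⟩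
  have hkQ : (x : ℚ) + 2 * y + 1 = 4 * k := by exact_mod_cast hk
  have hlQ : 2 * (x : ℚ) + y + 1 = 4 * l := by exact_mod_cast hl
  refine ⟨⟨by rw [hP, hc', hd'], ?_⟩, dvd_of_natCast_eq_mul (k := k) ?_,
    dvd_of_natCast_eq_mul (k := l) ?_, dvd_of_natCast_eq_mul hc', dvd_of_natCast_eq_mul hd'⟩
  · rw [hc', hd']
    simpa using Conic344.mul (conic344_intCast_iff.2 hconic) (ε : ℚ)
  · rw [ha']; linear_combination (ε / 4 : ℚ) * hkQ
  · rw [hb']; linear_combination (ε / 4 : ℚ) * hlQ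

/-- a quintuple (a,b,c,d,ε) of positive integers satisfies φ(P) = (3,4,4) with
every component divisible by ε iff P = β^{3n}(ε,ε,ε,ε,ε) for some integer n (an integer power
of β³ being a nonnegative power of β³ or of β⁻³). -/
theorem S344_eq_beta_cubed_orbit (ε : ℕ) (hε : 0 < ε) (a b c d : ℕ)
    (ha : 0 < a) (hb : 0 < b) (hc : 0 < c) (hd : 0 < d) :
    (phi ((a : ℚ), (b : ℚ), (c : ℚ), (d : ℚ), (ε : ℚ)) = (3, 4, 4) ∧
      ε ∣ a ∧ ε ∣ b ∧ ε ∣ c ∧ ε ∣ d) ↔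
    (∃ n : ℕ,
      ((a : ℚ), (b : ℚ), (c : ℚ), (d : ℚ), (ε : ℚ)) =
        actBeta^[3 * n] ((ε : ℚ), (ε : ℚ), (ε : ℚ), (ε : ℚ), (ε : ℚ)) ∨
      ((a : ℚ), (b : ℚ), (c : ℚ), (d : ℚ), (ε : ℚ)) =
        actBetaInv^[3 * n] ((ε : ℚ), (ε : ℚ), (ε : ℚ), (ε : ℚ), (ε : ℚ))) := by
  have hεQ : (0 : ℚ) < ε := by exact_mod_cast hε
  simp only [actBeta_iterate_three_mul hεQ, actBetaInv_iterate_three_mul hεQ]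
  constructor
  · rintro ⟨h, -, -, hεc, hεd⟩
    obtain ⟨x, y, hx, hy, hconic, hP⟩ := exists_conic344_of_phi_eq hε ha hb hc hd h hεc hεd
    obtain ⟨n, ⟨rfl, rfl⟩ | ⟨rfl, rfl⟩⟩ := (conic344_iff_exists_conicSeq hx hy).1 hconic
    exacts [⟨n, .inl hP⟩, ⟨n, .inr hP⟩]
  · rintro ⟨n, hP | hP⟩
    · exact phi_eq_and_dvd_of_eq_liftConic ha hb hc hd (conic344_conicSeq n)
        (conicSeq_modEq_one _) (conicSeq_modEq_one _) hP
    · exact phi_eq_and_dvd_of_eq_liftConic ha hb hc hd (conic344_conicSeq n).symm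
        (conicSeq_modEq_one _) (conicSeq_modEq_one _) hP
end
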